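/- arXiv:1007.1932 — 2 statements merged into one kernel-verified Lean document; each statement's English description precedes it below -/
import Mathlib

section
/- Boolean cumulants are additive for boolean independent variables: if X and Y are boolean independent selfadjoint elements with respect to a unital B-bimodule map φ, then B_{n,X+Y} = B_{n,X} + B_{n,Y} for all n ≥ 1, where B_{n,X} : Bⁿ → D are the operator-valued boolean cumulants. -/
/-- the word `z b₁ z b₂ ⋯ z bₙ` in the algebra `A`, for `l = [b₁, …, bₙ]`. -/
def wrd {B A : Type*} [CStarAlgebra B] [Ring A] [Algebra ℂ A] [StarRing A]
    (ι : B →⋆ₐ[ℂ] A) (z : A) (l : List B) : A :=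
  (l.map fun b => z * ι b).prod

/-- the non-unital polynomial algebra `B⟨z⟩₀` inside `A`: the linear span of the
monomials `b₀ z b₁ z ⋯ z bₙ`, `n ≥ 1`. -/
def polyNoConst {B A : Type*} [CStarAlgebra B] [Ring A] [Algebra ℂ A] [StarRing A]
    (ι : B →⋆ₐ[ℂ] A) (z : A) : Submodule ℂ A :=
  Submodule.span ℂ {a : A | ∃ (b : B) (t : List B), t ≠ [] ∧ a = ι b * wrd ι z t}

/-!
Expanding `wrd ι (x + y) l` letter by letter and grouping maximal runs of `x`'s and of `y`'s
writes it as a sum of alternating products of `x`-words and `y`-words; boolean independence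
turns `φ` of each such product into the product of the moments of its runs (`blockSum`).
Expanding the first run by the cumulant recursion of `x` (resp. `y`) and resumming the rest
shows that the moments of `x + y` satisfy the cumulant recursion with coefficients `cx + cy`,
and that recursion determines the cumulants.
-/

open Finset

section BlockSum

variable {B R : Type*} [Semiring R]

/-- The sum, over all ways to cut `l` into nonempty consecutive blocks labelled alternately
`ε, !ε, ε, …`, of the product of `f` over the labelled blocks. -/
def blockSum (f : Bool → List B → R) : Bool → List B → R
  | _, [] => 1
  | ε, b :: t =>
    ∑ k ∈ range (t.length + 1), f ε ((b :: t).take (k + 1)) * blockSum f (!ε) (t.drop k)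
  termination_by _ l => l.length
  decreasing_by simp only [List.length_cons, List.length_drop]; omega

/-- As `blockSum f ε`, but the first block (labelled `ε`) may be empty. -/
def weakBlockSum (f : Bool → List B → R) (ε : Bool) (l : List B) : R :=
  ∑ r ∈ range (l.length + 1), f ε (l.take r) * blockSum f (!ε) (l.drop r)

variable (f : Bool → List B → R) (ε : Bool)

@[simp]
theorem blockSum_nil : blockSum f ε [] = 1 := by
  rw [blockSum]

theorem blockSum_of_ne_nil {l : List B} (hl : l ≠ []) :
    blockSum f ε l =
      ∑ k ∈ range l.length, f ε (l.take (k + 1)) * blockSum f (!ε) (l.drop (k + 1)) := by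
  obtain ⟨b, t, rfl⟩ := List.exists_cons_of_ne_nil hl
  rw [blockSum]
  rfl

theorem weakBlockSum_nil (hf : f ε [] = 1) : weakBlockSum f ε [] = 1 := by
  simp [weakBlockSum, hf]

theorem weakBlockSum_of_ne_nil (hf : f ε [] = 1) {l : List B} (hl : l ≠ []) :
    weakBlockSum f ε l = blockSum f true l + blockSum f false l := by
  rw [weakBlockSum, sum_range_succ', ← blockSum_of_ne_nil f ε hl]
  simp only [List.take_zero, List.drop_zero, hf, one_mul]
  cases ε
  · exact add_comm _ _
  · rfl

theorem blockSum_cons (g : B → R) (hf : ∀ b s, f ε (b :: s) = g b * f ε s) (b : B)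
    (t : List B) : blockSum f ε (b :: t) = g b * weakBlockSum f ε t := by
  rw [blockSum, weakBlockSum, mul_sum]
  refine sum_congr rfl fun k _ => ?_
  rw [List.take_succ_cons, hf, mul_assoc]

theorem prod_map_add_eq_blockSum (g : Bool → B → R) {l : List B} (hl : l ≠ []) :
    (l.map fun b => g true b + g false b).prod =
      blockSum (fun ε s => (s.map (g ε)).prod) true l +
        blockSum (fun ε s => (s.map (g ε)).prod) false l := by
  set w : Bool → List B → R := fun ε s => (s.map (g ε)).prod
  have hweak : ∀ (l : List B) (ε : Bool),
      (l.map fun b => g true b + g false b).prod = weakBlockSum w ε l := by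
    intro l
    induction l with
    | nil => exact fun ε => (weakBlockSum_nil w ε List.prod_nil).symm
    | cons b t ih =>
      intro ε
      have hw : ∀ ε b s, w ε (b :: s) = g ε b * w ε s := fun _ _ _ => List.prod_cons
      rw [weakBlockSum_of_ne_nil w ε List.prod_nil (List.cons_ne_nil b t),
        blockSum_cons w true (g true) (hw true), blockSum_cons w false (g false) (hw false),
        ← ih, ← ih, List.map_cons, List.prod_cons, add_mul]
  rw [hweak l true, weakBlockSum_of_ne_nil w true List.prod_nil hl]

theorem blockSum_eq_sum_mul_weakBlockSum (c : List B → R)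
    (hc : ∀ u : List B, u ≠ [] →
      f ε u = ∑ j ∈ range u.length, c (u.take (j + 1)) * f ε (u.drop (j + 1)))
    {l : List B} (hl : l ≠ []) :
    blockSum f ε l =
      ∑ j ∈ range l.length, c (l.take (j + 1)) * weakBlockSum f ε (l.drop (j + 1)) := by
  have hsplit : ∀ k ∈ range l.length,
      f ε (l.take (k + 1)) * blockSum f (!ε) (l.drop (k + 1)) =
        ∑ j ∈ range (k + 1), c (l.take (j + 1)) *
          (f ε ((l.drop (j + 1)).take (k - j)) *
            blockSum f (!ε) ((l.drop (j + 1)).drop (k - j))) := by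
    intro k hk
    have hlen : (l.take (k + 1)).length = k + 1 := by
      simp only [List.length_take]; simp at hk; omega
    rw [hc _ (by simpa [List.take_eq_nil_iff] using hl), hlen, sum_mul]
    refine sum_congr rfl fun j hj => ?_
    have hjk : j ≤ k := Nat.lt_succ_iff.mp (mem_range.mp hj)
    rw [List.take_take, List.drop_take, List.drop_drop, mul_assoc,
      Nat.min_eq_left (by omega), show k + 1 - (j + 1) = k - j by omega,
      show j + 1 + (k - j) = k + 1 by omega]
  rw [blockSum_of_ne_nil f ε hl, sum_congr rfl hsplit]
  refine (sum_range_diag_flip l.length fun j r => c (l.take (j + 1)) *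
    (f ε ((l.drop (j + 1)).take r) * blockSum f (!ε) ((l.drop (j + 1)).drop r))).trans
      (sum_congr rfl fun j hj => ?_)
  have hlen : l.length - j = (l.drop (j + 1)).length + 1 := by
    simp only [List.length_drop]; simp at hj; omega
  rw [← mul_sum, hlen, weakBlockSum]

end BlockSum

theorem eq_of_sum_take_mul_drop {B R : Type*} [Ring R] (M : List B → R) (hM : M [] = 1)
    {c c' : List B → R}
    (hc : ∀ l : List B, l ≠ [] →
      M l = ∑ j ∈ range l.length, c (l.take (j + 1)) * M (l.drop (j + 1)))
    (hc' : ∀ l : List B, l ≠ [] →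
      M l = ∑ j ∈ range l.length, c' (l.take (j + 1)) * M (l.drop (j + 1)))
    (l : List B) (hl : l ≠ []) : c l = c' l := by
  induction hn : l.length using Nat.strong_induction_on generalizing l with
  | _ n ih =>
    have hsplit : ∀ c : List B → R,
        ∑ j ∈ range l.length, c (l.take (j + 1)) * M (l.drop (j + 1)) =
          ∑ j ∈ range (l.length - 1), c (l.take (j + 1)) * M (l.drop (j + 1)) + c l := by
      intro c
      have hn1 : l.length = l.length - 1 + 1 := by have := List.length_pos_iff.mpr hl; omega
      conv_lhs => rw [hn1, sum_range_succ, ← hn1, List.take_length,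
        List.drop_length, hM, mul_one]
    have h := (hc l hl).symm.trans (hc' l hl)
    rw [hsplit, hsplit] at h
    refine add_left_cancel (h.trans (congrArg (· + _) (sum_congr rfl fun j hj => ?_)))
    have hj : j + 1 < n := by simp at hj; omega
    rw [ih (j + 1) hj _ (by simpa [List.take_eq_nil_iff] using hl) (by simp; omega)]

theorem map_prod_mul_blockSum {B A D F : Type*} [Semiring A] [Semiring D] [FunLike F A D]
    [AddMonoidHomClass F A D] (φ : F) (V : Bool → Set A)
    (hφ : ∀ ops : List (A × Bool), (ops.map Prod.snd).IsChain (· ≠ ·) →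
      (∀ p ∈ ops, p.1 ∈ V p.2) → φ (ops.map Prod.fst).prod = (ops.map fun p => φ p.1).prod)
    (w : Bool → List B → A) (hw : ∀ ε s, s ≠ [] → w ε s ∈ V ε) (l : List B) (ε : Bool)
    (ops : List (A × Bool)) (hchain : (ops.map Prod.snd ++ [ε]).IsChain (· ≠ ·))
    (hops : ∀ p ∈ ops, p.1 ∈ V p.2) :
    φ ((ops.map Prod.fst).prod * blockSum w ε l) =
      (ops.map fun p => φ p.1).prod * blockSum (fun ε s => φ (w ε s)) ε l := by
  induction hn : l.length using Nat.strong_induction_on generalizing l ε ops with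
  | _ n ih =>
    rcases eq_or_ne l [] with rfl | hl
    · simpa using hφ ops hchain.left_of_append hops
    rw [blockSum_of_ne_nil _ _ hl, blockSum_of_ne_nil _ _ hl, mul_sum, mul_sum, map_sum]
    refine sum_congr rfl fun k hk => ?_
    have hkn : k < n := hn ▸ mem_range.mp hk
    set block : A × Bool := (w ε (l.take (k + 1)), ε)
    have hchain' : ((ops ++ [block]).map Prod.snd ++ [!ε]).IsChain (· ≠ ·) := by
      rw [List.map_append, List.map_singleton]
      exact hchain.append (List.isChain_singleton _) (by simp)
    have hops' : ∀ p ∈ ops ++ [block], p.1 ∈ V p.2 := by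
      simp only [List.mem_append, List.mem_singleton]
      rintro p (hp | rfl)
      · exact hops p hp
      · exact hw ε _ (by simpa [List.take_eq_nil_iff] using hl)
    have h := ih (n - (k + 1)) (by omega) (l.drop (k + 1)) (!ε) _ hchain' hops' (by simp [hn])
    simpa [block, mul_assoc] using h

section Words

variable {B A : Type*} [CStarAlgebra B] [Ring A] [Algebra ℂ A] [StarRing A]
  (ι : B →⋆ₐ[ℂ] A)

theorem wrd_mem_polyNoConst (z : A) {s : List B} (hs : s ≠ []) : wrd ι z s ∈ polyNoConst ι z :=
  Submodule.subset_span ⟨1, s, hs, by rw [map_one, one_mul]⟩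

theorem wrd_add_eq_blockSum (x y : A) {l : List B} (hl : l ≠ []) :
    wrd ι (x + y) l =
      blockSum (fun ε => wrd ι (if ε then x else y)) true l +
        blockSum (fun ε => wrd ι (if ε then x else y)) false l := by
  simp only [wrd, add_mul]
  exact prod_map_add_eq_blockSum (fun ε b => (if ε then x else y) * ι b) hl

end Words

theorem boolean_cumulants_additive_general
    {B A D : Type*} [CStarAlgebra B]
    [Ring A] [StarRing A] [Algebra ℂ A]
    [CStarAlgebra D] (ι : B →⋆ₐ[ℂ] A)
    (φ : A →ₗ[ℂ] D) (hunital : φ 1 = 1)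
    (x y : A)
    (hind : ∀ ops : List (A × Bool),
      (ops.map Prod.snd).Chain' (· ≠ ·) →
      (∀ p ∈ ops, p.1 ∈ polyNoConst ι (if p.2 then x else y)) →
      φ ((ops.map Prod.fst).prod) = ((ops.map fun p => φ p.1).prod))
    (cx cy cs : List B → D)
    (hcx : ∀ l : List B, l ≠ [] → φ (wrd ι x l) =
      ∑ k ∈ Finset.range l.length, cx (l.take (k + 1)) * φ (wrd ι x (l.drop (k + 1))))
    (hcy : ∀ l : List B, l ≠ [] → φ (wrd ι y l) =
      ∑ k ∈ Finset.range l.length, cy (l.take (k + 1)) * φ (wrd ι y (l.drop (k + 1))))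
    (hcs : ∀ l : List B, l ≠ [] → φ (wrd ι (x + y) l) =
      ∑ k ∈ Finset.range l.length, cs (l.take (k + 1)) * φ (wrd ι (x + y) (l.drop (k + 1)))) :
    ∀ l : List B, l ≠ [] → cs l = cx l + cy l := by
  set w : Bool → List B → A := fun ε => wrd ι (if ε then x else y)
  set m : Bool → List B → D := fun ε s => φ (w ε s)
  have hmoment : ∀ l : List B, l ≠ [] →
      φ (wrd ι (x + y) l) = blockSum m true l + blockSum m false l := by
    intro l hl
    have hφ (ε : Bool) : φ (blockSum w ε l) = blockSum m ε l := by
      simpa using map_prod_mul_blockSum φ (fun ε => polyNoConst ι (if ε then x else y)) hind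
        w (fun ε _ hs => wrd_mem_polyNoConst ι _ hs) l ε [] (by simp) (by simp)
    rw [wrd_add_eq_blockSum ι x y hl, map_add, hφ true, hφ false]
  have hweak (ε : Bool) (l : List B) : weakBlockSum m ε l = φ (wrd ι (x + y) l) := by
    have hm : m ε [] = 1 := hunital
    rcases eq_or_ne l [] with rfl | hl
    · exact (weakBlockSum_nil m ε hm).trans hunital.symm
    · rw [weakBlockSum_of_ne_nil m ε hm hl, hmoment l hl]
  have hsum : ∀ l : List B, l ≠ [] → φ (wrd ι (x + y) l) =
      ∑ j ∈ range l.length, (cx + cy) (l.take (j + 1)) * φ (wrd ι (x + y) (l.drop (j + 1))) := by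
    intro l hl
    rw [hmoment l hl, blockSum_eq_sum_mul_weakBlockSum m true cx hcx hl,
      blockSum_eq_sum_mul_weakBlockSum m false cy hcy hl, ← sum_add_distrib]
    simp only [hweak, Pi.add_apply, add_mul]
  exact eq_of_sum_take_mul_drop _ hunital hcs hsum

/-- **additivity of operator-valued boolean cumulants.**
`B ⊆ D`, `B ⊆ A` unital inclusions of `*`-algebras, `φ : A → D` a unital
`B`-bimodule map, and `x, y ∈ A` selfadjoint, boolean independent with respect to
`φ` (alternating products out of `B⟨x⟩₀`, `B⟨y⟩₀` factorize under `φ`).  If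
`cx`, `cy`, `cs` are the boolean cumulant functionals of `x`, `y` and `x + y`
(defined through the recursion
`φ(z b₁ ⋯ z bₙ) = ∑_{k=1}^{n} B_k(b₁,…,b_k) φ(z b_{k+1} ⋯ z bₙ)`), then
`B_{n, x+y} = B_{n,x} + B_{n,y}` for all `n ≥ 1`. -/
theorem boolean_cumulants_additive
    {B A D : Type*} [CStarAlgebra B]
    [Ring A] [StarRing A] [Algebra ℂ A] [StarModule ℂ A]
    [CStarAlgebra D] (ι : B →⋆ₐ[ℂ] A) (ιD : B →⋆ₐ[ℂ] D)
    (φ : A →ₗ[ℂ] D) (hunital : φ 1 = 1)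
    (hbimod : ∀ (b b' : B) (a : A), φ (ι b * a * ι b') = ιD b * φ a * ιD b')
    (x y : A) (hx : star x = x) (hy : star y = y)
    (hind : ∀ ops : List (A × Bool),
      (ops.map Prod.snd).Chain' (· ≠ ·) →
      (∀ p ∈ ops, p.1 ∈ polyNoConst ι (if p.2 then x else y)) →
      φ ((ops.map Prod.fst).prod) = ((ops.map fun p => φ p.1).prod))
    (cx cy cs : List B → D)
    (hcx : ∀ l : List B, l ≠ [] → φ (wrd ι x l) =
      ∑ k ∈ Finset.range l.length, cx (l.take (k + 1)) * φ (wrd ι x (l.drop (k + 1))))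
    (hcy : ∀ l : List B, l ≠ [] → φ (wrd ι y l) =
      ∑ k ∈ Finset.range l.length, cy (l.take (k + 1)) * φ (wrd ι y (l.drop (k + 1))))
    (hcs : ∀ l : List B, l ≠ [] → φ (wrd ι (x + y) l) =
      ∑ k ∈ Finset.range l.length, cs (l.take (k + 1)) * φ (wrd ι (x + y) (l.drop (k + 1)))) :
    ∀ l : List B, l ≠ [] → cs l = cx l + cy l :=
  boolean_cumulants_additive_general ι φ hunital x y hind cx cy cs hcx hcy hcs
end

section
/- In the scalar case, let H be a Hilbert space with distinguished unit vector Ω, ξ ∈ H orthogonal to Ω, T a selfadjoint operator on H⊖ℂΩ, λ ∈ ℝ, and let a_ξ, a*_ξ be the boolean annihilation/creation operators (a*_ξ Ω = ξ, a*_ξ|_{H⊖ℂΩ} = 0, a_ξ = (a*_ξ)*) and Λ = λ·(projection onto ℂΩ). Then the boolean cumulants of V = a_ξ + a*_ξ + T + Λ with respect to the vector state ⟨·Ω, Ω⟩ are B₁ = λ and Bₙ = ⟨T^{n-2} ξ, ξ⟩ for n ≥ 2. -/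
/-!
Let `Q` be the orthogonal projection onto `Ωᗮ`. Writing `V x = ⟪Ω, V x⟫ Ω + Q V x` after each
factor of `Vⁿ` and stopping at the first return to `ℂΩ` gives
`Vⁿ Ω = ∑ₖ ⟪Ω, V (Q V)ᵏ⁻¹ Ω⟫ Vⁿ⁻ᵏ Ω + (Q V)ⁿ Ω`; pairing with `Ω` yields the boolean recursion
with `Bₖ = ⟪V (Q V)ᵏ⁻¹ Ω, Ω⟫`, for any operator `V` and unit vector `Ω`, and since the moment
sequence starts with `1` the recursion determines the cumulants. For `V = a + a' + T + Λ` we have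
`V Ω = λ Ω + ξ` and `Q V = T` on `Ωᗮ`, so `(Q V)ʲ⁺¹ Ω = Tʲ ξ`.
-/

open Finset InnerProductSpace
open scoped InnerProductSpace

def IsBooleanCumulants {R : Type*} [Semiring R] (m B : ℕ → R) : Prop :=
  ∀ n, 1 ≤ n → m n = ∑ k ∈ Icc 1 n, m (n - k) * B k

theorem IsBooleanCumulants.unique {R : Type*} [Ring R] {m B B' : ℕ → R} (hm : m 0 = 1)
    (hB : IsBooleanCumulants m B) (hB' : IsBooleanCumulants m B') :
    ∀ n, 1 ≤ n → B n = B' n := by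
  intro n
  induction n using Nat.strong_induction_on with
  | _ n ih =>
    intro hn
    obtain ⟨n, rfl⟩ : ∃ k, n = k + 1 := ⟨n - 1, by omega⟩
    have hlower : ∑ k ∈ Icc 1 n, m (n + 1 - k) * B k = ∑ k ∈ Icc 1 n, m (n + 1 - k) * B' k :=
      sum_congr rfl fun k hk => by rw [ih k (by grind) (mem_Icc.1 hk).1]
    have h := (hB (n + 1) hn).symm.trans (hB' (n + 1) hn)
    rwa [sum_Icc_succ_top hn, sum_Icc_succ_top hn, hlower, Nat.sub_self, hm, one_mul, one_mul,
      add_right_inj] at h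

theorem Finset.sum_Icc_one_eq_sum_range {M : Type*} [AddCommMonoid M] (f : ℕ → M) (n : ℕ) :
    ∑ k ∈ Icc 1 n, f k = ∑ k ∈ range n, f (k + 1) := by
  rw [← Ico_add_one_right_eq_Icc, sum_Ico_eq_sum_range, Nat.add_sub_cancel]
  simp only [add_comm 1]

section VectorState

variable {𝕜 E : Type*} [RCLike 𝕜] [NormedAddCommGroup E] [InnerProductSpace 𝕜 E] {Ω : E}

theorem inner_smul_add_starProjection_orthogonal_singleton (hΩ : ‖Ω‖ = 1) (x : E) :
    ⟪Ω, x⟫_𝕜 • Ω + (𝕜 ∙ Ω)ᗮ.starProjection x = x := by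
  rw [← Submodule.starProjection_unit_singleton 𝕜 hΩ,
    Submodule.starProjection_add_starProjection_orthogonal]

theorem starProjection_orthogonal_singleton_smul_add {y : E} (hy : ⟪y, Ω⟫_𝕜 = 0) (c : 𝕜) :
    (𝕜 ∙ Ω)ᗮ.starProjection (c • Ω + y) = y := by
  rw [map_add, map_smul, Submodule.starProjection_orthogonalComplement_singleton_eq_zero,
    smul_zero, zero_add, Submodule.starProjection_eq_self_iff,
    Submodule.mem_orthogonal_singleton_iff_inner_left]
  exact hy

theorem pow_apply_eq_sum_add_pow_apply (hΩ : ‖Ω‖ = 1) (V : E →L[𝕜] E) (n : ℕ) (x : E) :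
    (V ^ n) x = ∑ k ∈ range n,
        ⟪Ω, V ((((𝕜 ∙ Ω)ᗮ.starProjection * V) ^ k) x)⟫_𝕜 • (V ^ (n - 1 - k)) Ω
      + (((𝕜 ∙ Ω)ᗮ.starProjection * V) ^ n) x := by
  induction n generalizing x with
  | zero => simp
  | succ n ih =>
    calc (V ^ (n + 1)) x
        = (V ^ n) (⟪Ω, V x⟫_𝕜 • Ω + ((𝕜 ∙ Ω)ᗮ.starProjection * V) x) := by
          rw [pow_succ, mul_apply_eq_comp, mul_apply_eq_comp,
            inner_smul_add_starProjection_orthogonal_singleton hΩ]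
      _ = _ := by
          rw [map_add, map_smul, ih (((𝕜 ∙ Ω)ᗮ.starProjection * V) x), sum_range_succ',
            ← add_assoc, add_comm _ (_ • _)]
          simp only [pow_succ, mul_apply_eq_comp, Nat.sub_zero, Nat.add_sub_cancel, pow_zero,
            Nat.sub_sub, add_comm 1, one_apply_eq_self]

/-- Only `k ≥ 1` is a cumulant index; the value at `k = 0` is irrelevant. -/
noncomputable def vectorStateBooleanCumulant (Ω : E) (V : E →L[𝕜] E) (k : ℕ) : 𝕜 :=
  ⟪V ((((𝕜 ∙ Ω)ᗮ.starProjection * V) ^ (k - 1)) Ω), Ω⟫_𝕜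

theorem isBooleanCumulants_vectorStateBooleanCumulant (hΩ : ‖Ω‖ = 1) (V : E →L[𝕜] E) :
    IsBooleanCumulants (fun n => ⟪(V ^ n) Ω, Ω⟫_𝕜) (vectorStateBooleanCumulant Ω V) := by
  intro n hn
  dsimp only
  have hreturn : ⟪(((𝕜 ∙ Ω)ᗮ.starProjection * V) ^ n) Ω, Ω⟫_𝕜 = 0 := by
    obtain ⟨n, rfl⟩ : ∃ k, n = k + 1 := ⟨n - 1, by omega⟩
    rw [pow_succ', mul_apply_eq_comp, mul_apply_eq_comp,
      ← Submodule.mem_orthogonal_singleton_iff_inner_left]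
    exact Submodule.starProjection_apply_mem _ _
  rw [pow_apply_eq_sum_add_pow_apply hΩ, inner_add_left, hreturn, add_zero, sum_inner,
    sum_Icc_one_eq_sum_range]
  refine sum_congr rfl fun k _ => ?_
  rw [inner_smul_left, inner_conj_symm, mul_comm, vectorStateBooleanCumulant, Nat.add_sub_cancel,
    Nat.sub_sub, add_comm 1]

theorem vectorStateBooleanCumulant_one (V : E →L[𝕜] E) :
    vectorStateBooleanCumulant Ω V 1 = ⟪V Ω, Ω⟫_𝕜 := by
  rw [vectorStateBooleanCumulant, Nat.sub_self, pow_zero, one_apply_eq_self]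

theorem vectorStateBooleanCumulant_add_two {V T : E →L[𝕜] E} {ξ : E} {c : 𝕜} (hΩ : ‖Ω‖ = 1)
    (hξ : ⟪ξ, Ω⟫_𝕜 = 0) (hT : ∀ η, ⟪η, Ω⟫_𝕜 = 0 → ⟪T η, Ω⟫_𝕜 = 0)
    (hVΩ : V Ω = c • Ω + ξ) (hV : ∀ η, ⟪η, Ω⟫_𝕜 = 0 → V η = ⟪ξ, η⟫_𝕜 • Ω + T η) (j : ℕ) :
    vectorStateBooleanCumulant Ω V (j + 2) = ⟪(T ^ j) ξ, ξ⟫_𝕜 := by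
  have hexcursion : ∀ j, (((𝕜 ∙ Ω)ᗮ.starProjection * V) ^ (j + 1)) Ω = (T ^ j) ξ ∧
      ⟪(T ^ j) ξ, Ω⟫_𝕜 = 0 := by
    intro j
    induction j with
    | zero =>
      rw [zero_add, pow_one, mul_apply_eq_comp, hVΩ,
        starProjection_orthogonal_singleton_smul_add hξ, pow_zero, one_apply_eq_self]
      exact ⟨rfl, hξ⟩
    | succ j ih =>
      have hTj := hT _ ih.2
      rw [pow_succ', mul_apply_eq_comp, ih.1, mul_apply_eq_comp, hV _ ih.2,
        starProjection_orthogonal_singleton_smul_add hTj, pow_succ', mul_apply_eq_comp]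
      exact ⟨rfl, hTj⟩
  obtain ⟨hpow, horth⟩ := hexcursion j
  rw [vectorStateBooleanCumulant, show j + 2 - 1 = j + 1 by omega, hpow, hV _ horth, inner_add_left,
    inner_smul_left, inner_self_eq_one_of_norm_eq_one hΩ, inner_conj_symm, mul_one, hT _ horth,
    add_zero]

end VectorState

theorem ContinuousLinearMap.eq_rankOne_of_forall_inner_eq_zero {𝕜 E F : Type*} [RCLike 𝕜]
    [NormedAddCommGroup E] [InnerProductSpace 𝕜 E] [NormedAddCommGroup F] [NormedSpace 𝕜 F]
    {Ω : E} (hΩ : ‖Ω‖ = 1) (f : E →L[𝕜] F) (hf : ∀ η, ⟪η, Ω⟫_𝕜 = 0 → f η = 0) :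
    f = rankOne 𝕜 (f Ω) Ω := by
  ext x
  have hperp : ⟪(𝕜 ∙ Ω)ᗮ.starProjection x, Ω⟫_𝕜 = 0 :=
    Submodule.mem_orthogonal_singleton_iff_inner_left.1 (Submodule.starProjection_apply_mem _ _)
  conv_lhs => rw [← inner_smul_add_starProjection_orthogonal_singleton (𝕜 := 𝕜) hΩ x]
  rw [map_add, map_smul, hf _ hperp, add_zero, rankOne_apply]

open scoped ComplexInnerProductSpace in
theorem boolean_cumulants_fock_scalar_general
    {H : Type*} [NormedAddCommGroup H] [InnerProductSpace ℂ H] [CompleteSpace H]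
    (Ω ξ : H) (hΩ : ‖Ω‖ = 1) (hξΩ : ⟪ξ, Ω⟫ = 0)
    (a a' T Λ : H →L[ℂ] H) (lam : ℝ)
    (ha' : a' Ω = ξ) (ha'0 : ∀ η : H, ⟪η, Ω⟫ = 0 → a' η = 0)
    (ha : a = ContinuousLinearMap.adjoint a')
    (hTΩ : T Ω = 0) (hTperp : ∀ η : H, ⟪η, Ω⟫ = 0 → ⟪T η, Ω⟫ = 0)
    (hΛΩ : Λ Ω = (lam : ℂ) • Ω) (hΛ0 : ∀ η : H, ⟪η, Ω⟫ = 0 → Λ η = 0)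
    (V : H →L[ℂ] H) (hV : V = a + a' + T + Λ)
    (Bc : ℕ → ℂ)
    (hBc : ∀ n : ℕ, 1 ≤ n →
      ⟪(V ^ n) Ω, Ω⟫ = ∑ k ∈ Finset.Icc 1 n, ⟪(V ^ (n - k)) Ω, Ω⟫ * Bc k) :
    Bc 1 = (lam : ℂ) ∧ ∀ n : ℕ, 2 ≤ n → Bc n = ⟪(T ^ (n - 2)) ξ, ξ⟫ := by
  have ha_eq : a = rankOne ℂ Ω ξ := by
    rw [ha, a'.eq_rankOne_of_forall_inner_eq_zero hΩ ha'0, adjoint_rankOne, ha']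
  have hVΩ : V Ω = (lam : ℂ) • Ω + ξ := by
    rw [hV, add_apply, add_apply, add_apply, ha_eq, rankOne_apply, hξΩ, ha', hTΩ, hΛΩ, zero_smul]
    abel
  have hVperp : ∀ η, ⟪η, Ω⟫ = 0 → V η = ⟪ξ, η⟫ • Ω + T η := by
    intro η hη
    rw [hV, add_apply, add_apply, add_apply, ha_eq, rankOne_apply, ha'0 η hη, hΛ0 η hη, add_zero,
      add_zero]
  have hB := (isBooleanCumulants_vectorStateBooleanCumulant hΩ V).unique (by simp [hΩ]) hBc
  refine ⟨?_, fun n hn => ?_⟩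
  · rw [← hB 1 le_rfl, vectorStateBooleanCumulant_one, hVΩ, inner_add_left, inner_smul_left,
      inner_self_eq_one_of_norm_eq_one hΩ, hξΩ, Complex.conj_ofReal, mul_one, add_zero]
  · obtain ⟨j, rfl⟩ : ∃ j, n = j + 2 := ⟨n - 2, by omega⟩
    rw [← hB _ (by omega), vectorStateBooleanCumulant_add_two hΩ hξΩ hTperp hVΩ hVperp, Nat.add_sub_cancel]

open scoped ComplexInnerProductSpace in
/-- **scalar boolean Fock realization of boolean cumulants.**
`H` a Hilbert space, `Ω` a unit vector, `ξ ⊥ Ω`; `a'` is the boolean creation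
operator (`a' Ω = ξ`, `a' = 0` on `Ω^⊥`) and `a = (a')^*`; `T` is selfadjoint,
kills `Ω` and preserves `Ω^⊥`; `Λ = λ · (projection onto ℂΩ)`.  If `(Bc n)` are
the boolean cumulants of `V = a + a' + T + Λ` with respect to the state
`⟨·Ω, Ω⟩`, i.e. `⟨VⁿΩ, Ω⟩ = ∑_{k=1}^n ⟨V^{n-k}Ω, Ω⟩ · Bc k` for `n ≥ 1`, then
`Bc 1 = λ` and `Bc n = ⟨T^{n-2} ξ, ξ⟩` for `n ≥ 2`. -/
theorem boolean_cumulants_fock_scalar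
    {H : Type*} [NormedAddCommGroup H] [InnerProductSpace ℂ H] [CompleteSpace H]
    (Ω ξ : H) (hΩ : ‖Ω‖ = 1) (hξΩ : ⟪ξ, Ω⟫ = 0)
    (a a' T Λ : H →L[ℂ] H) (lam : ℝ)
    (ha' : a' Ω = ξ) (ha'0 : ∀ η : H, ⟪η, Ω⟫ = 0 → a' η = 0)
    (ha : a = ContinuousLinearMap.adjoint a')
    (hTsa : T = ContinuousLinearMap.adjoint T)
    (hTΩ : T Ω = 0) (hTperp : ∀ η : H, ⟪η, Ω⟫ = 0 → ⟪T η, Ω⟫ = 0)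
    (hΛΩ : Λ Ω = (lam : ℂ) • Ω) (hΛ0 : ∀ η : H, ⟪η, Ω⟫ = 0 → Λ η = 0)
    (V : H →L[ℂ] H) (hV : V = a + a' + T + Λ)
    (Bc : ℕ → ℂ)
    (hBc : ∀ n : ℕ, 1 ≤ n →
      ⟪(V ^ n) Ω, Ω⟫ = ∑ k ∈ Finset.Icc 1 n, ⟪(V ^ (n - k)) Ω, Ω⟫ * Bc k) :
    Bc 1 = (lam : ℂ) ∧ ∀ n : ℕ, 2 ≤ n → Bc n = ⟪(T ^ (n - 2)) ξ, ξ⟫ :=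
  boolean_cumulants_fock_scalar_general Ω ξ hΩ hξΩ a a' T Λ lam ha' ha'0 ha hTΩ hTperp hΛΩ hΛ0 V hV
    Bc hBc
end
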